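/- Under the assumptions of the previous setup (A* 𝒞 = 0, X̂ = [𝒞 𝒳] with orthonormal columns), the reduced solution v(t) = exp(t · X̂* A X̂) v₀ with v₀ = X̂* x₀ has its first M components constant in time: for all t, the first block of v(t) equals 𝒞* x₀. Hence the Galerkin-reduced dynamics preserves the linear invariants 𝒞* x̃(t) = 𝒞* x₀ exactly, where x̃(t) = X̂ v(t). -/

import Mathlib

/-!
The top block-row of the Galerkin matrix `X̂ᴴ A X̂` is `Cᴴ A X̂ = (Aᴴ C)ᴴ X̂ = 0`. If `p` is the
projection onto the first block and `p B = 0`, then `p Bⁿ = 0` for `n ≥ 1`, so the exponential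
series gives `p exp B = p`: the first block of `exp (t B) v₀` is that of `v₀`, which is `Cᴴ x₀`.
Orthonormality of `X̂ = [C X]` turns `Cᴴ X̂ v` into the first block of `v`.
-/

open Matrix

attribute [local instance] Matrix.linftyOpNormedRing Matrix.linftyOpNormedAlgebra

theorem NormedSpace.mul_exp_eq_self_of_mul_eq_zero (𝕂 : Type*) {𝔸 : Type*} [RCLike 𝕂]
    [NormedRing 𝔸] [NormedAlgebra 𝕂 𝔸] [CompleteSpace 𝔸] {p a : 𝔸} (h : p * a = 0) :
    p * exp a = p := by
  have hterm : ∀ n ≠ 0, p * ((n.factorial⁻¹ : 𝕂) • a ^ n) = 0 := by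
    rintro (_ | n) hn
    · exact absurd rfl hn
    · rw [mul_smul_comm, pow_succ', ← mul_assoc, h, zero_mul, smul_zero]
  refine ((exp_series_hasSum_exp' (𝕂 := 𝕂) a).mul_left p).unique ?_
  simpa using hasSum_single 0 hterm

namespace Matrix

theorem exp_mulVec_inl_of_toRows₁_eq_zero {𝕂 m n : Type*} [RCLike 𝕂] [Fintype m] [Fintype n]
    [DecidableEq m] [DecidableEq n] {B : Matrix (m ⊕ n) (m ⊕ n) 𝕂} (hB : B.toRows₁ = 0)
    (w : m ⊕ n → 𝕂) (i : m) : (NormedSpace.exp B *ᵥ w) (Sum.inl i) = w (Sum.inl i) := by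
  set p : Matrix (m ⊕ n) (m ⊕ n) 𝕂 := diagonal (Sum.elim 1 0)
  have hpB : p * B = 0 := by
    ext (k | k) j
    · simpa [p, diagonal_mul] using congrFun₂ hB k j
    · simp [p, diagonal_mul]
  have hp : ∀ y, (p *ᵥ y) (Sum.inl i) = y (Sum.inl i) := by simp [p, mulVec_diagonal]
  -- Completeness must be stated for the uniformity of the `linftyOp` norm, which instance search
  -- does not identify with the product uniformity on matrices.
  have : @CompleteSpace (Matrix (m ⊕ n) (m ⊕ n) 𝕂) PseudoMetricSpace.toUniformSpace :=
    FiniteDimensional.complete 𝕂 _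
  have hexp : p * NormedSpace.exp B = p := NormedSpace.mul_exp_eq_self_of_mul_eq_zero 𝕂 hpB
  rw [← hp (NormedSpace.exp B *ᵥ w), mulVec_mulVec, hexp, hp]

variable {R m n₁ n₂ : Type*} [Fintype m] [Semiring R] [StarRing R]

theorem conjTranspose_fromCols_mulVec_inl (C : Matrix m n₁ R) (X : Matrix m n₂ R) (y : m → R)
    (i : n₁) : ((fromCols C X)ᴴ *ᵥ y) (Sum.inl i) = (Cᴴ *ᵥ y) i :=
  rfl

theorem conjTranspose_mulVec_fromCols_mulVec [Fintype n₁] [Fintype n₂] [DecidableEq n₁]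
    [DecidableEq n₂] {C : Matrix m n₁ R} {X : Matrix m n₂ R}
    (h : (fromCols C X)ᴴ * fromCols C X = 1) (y : n₁ ⊕ n₂ → R) :
    Cᴴ *ᵥ (fromCols C X *ᵥ y) = fun i => y (Sum.inl i) := by
  ext i
  rw [← conjTranspose_fromCols_mulVec_inl C X, mulVec_mulVec, h, one_mulVec]

end Matrix

theorem stmt_7 {N M r : ℕ} (A : Matrix (Fin N) (Fin N) ℂ)
    (C : Matrix (Fin N) (Fin M) ℂ) (X : Matrix (Fin N) (Fin r) ℂ)
    (hC : Aᴴ * C = 0)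
    (horth : (Matrix.fromCols C X)ᴴ * Matrix.fromCols C X = 1)
    (x₀ : Fin N → ℂ)
    (v : ℝ → (Fin M ⊕ Fin r) → ℂ)
    (hv : ∀ t : ℝ, v t =
      (NormedSpace.exp
          ((t : ℂ) • ((Matrix.fromCols C X)ᴴ * A * Matrix.fromCols C X))).mulVec
        ((Matrix.fromCols C X)ᴴ.mulVec x₀)) :
    ∀ t : ℝ, (∀ i : Fin M, v t (Sum.inl i) = Cᴴ.mulVec x₀ i) ∧
      Cᴴ.mulVec ((Matrix.fromCols C X).mulVec (v t)) = Cᴴ.mulVec x₀ := by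
  intro t
  have hCA : Cᴴ * A = 0 := by simpa using congrArg conjTranspose hC
  have hB : ((t : ℂ) • ((fromCols C X)ᴴ * A * fromCols C X)).toRows₁ = 0 := by
    rw [conjTranspose_fromCols_eq_fromRows_conjTranspose, fromRows_mul, fromRows_mul, hCA,
      Matrix.zero_mul]
    ext i j
    simp
  have hfirst : ∀ i, v t (Sum.inl i) = (Cᴴ *ᵥ x₀) i := fun i => by
    rw [hv t, exp_mulVec_inl_of_toRows₁_eq_zero hB, conjTranspose_fromCols_mulVec_inl]
  refine ⟨hfirst, ?_⟩
  rw [conjTranspose_mulVec_fromCols_mulVec horth]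
  exact funext hfirst
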